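/- arXiv:1507.02714 — 2 statements merged into one kernel-verified Lean document; each statement's English description precedes it below -/
import Mathlib

section
/- Let P₋, P, P₊ be three non-collinear points in the Euclidean plane, θ ∈ (0, π) the angle between U = P₋ − P and V = P₊ − P, and let r > 0. Set l_t = r/tan(θ/2), l_x = l_t/cos(θ/2), E = P + l_t·U/‖U‖, F = P + l_t·V/‖V‖, and C = P + l_x·(Q − P)/‖Q − P‖, where Q = P₋ + (‖U‖·‖W‖/(‖U‖ + ‖V‖))·W/‖W‖ with W = P₊ − P₋. Then dist(C, E) = r, dist(C, F) = r, the vector C − E is orthogonal to U (⟪C − E, U⟫ = 0), and the vector C − F is orthogonal to V (⟪C − F, V⟫ = 0); that is, the circle of radius r centered at C meets the line through P and P₋ perpendicularly at E and the line through P and P₊ perpendicularly at F. -/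
/-!
Let `u`, `v` be the unit vectors along `U`, `V`. The point `Q` divides `P₋P₊` in the ratio
`‖U‖ : ‖V‖`, so `Q - P` is a positive multiple of `u + v` (angle bisector theorem), and
`‖u + v‖ = 2 cos (θ / 2)`. Hence `C = P + l_x • w` for the unit bisector `w`, which satisfies
`⟪w, u⟫ = ⟪w, v⟫ = cos (θ / 2)`. As `l_t = l_x cos (θ / 2)`, the vector `C - E = l_x • w - l_t • u`
is the component of `l_x • w` orthogonal to `u`, of length `l_x sin (θ / 2) = r`; likewise for `F`.
-/

open scoped RealInnerProductSpace
open InnerProductGeometry NormedSpace Real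

lemma Real.two_mul_cos_half_sq (x : ℝ) : 2 * cos (x / 2) ^ 2 = 1 + cos x := by
  rw [cos_sq, mul_div_cancel₀ _ two_ne_zero]
  ring

section InnerProductSpace

variable {V : Type*} [NormedAddCommGroup V] [InnerProductSpace ℝ V]

lemma angle_mem_Ioo_of_linearIndependent {x y : V} (h : LinearIndependent ℝ ![x, y]) :
    angle x y ∈ Set.Ioo 0 π := by
  have not_smul : ∀ r : ℝ, y ≠ r • x := fun r hy => by
    simpa using LinearIndependent.pair_iff.mp h r (-1) (by simp [hy])
  refine ⟨(angle_nonneg x y).lt_of_ne fun h0 => ?_, (angle_le_pi x y).lt_of_ne fun hπ => ?_⟩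
  · obtain ⟨-, r, -, hr⟩ := angle_eq_zero_iff.mp h0.symm
    exact not_smul r hr
  · obtain ⟨-, r, -, hr⟩ := angle_eq_pi_iff.mp hπ
    exact not_smul r hr

lemma normalize_add_div_smul_normalize_sub {x y : V} (hx : x ≠ 0) (hy : y ≠ 0) (hxy : x ≠ y) :
    normalize (x + (‖x‖ * ‖y - x‖ / (‖x‖ + ‖y‖)) • (‖y - x‖⁻¹ • (y - x))) =
      normalize (normalize x + normalize y) := by
  have hx' : ‖x‖ ≠ 0 := norm_ne_zero_iff.mpr hx
  have hy' : ‖y‖ ≠ 0 := norm_ne_zero_iff.mpr hy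
  have hyx : ‖y - x‖ ≠ 0 := norm_ne_zero_iff.mpr (sub_ne_zero.mpr hxy.symm)
  have hxy' : ‖x‖ + ‖y‖ ≠ 0 := by positivity
  have h : x + (‖x‖ * ‖y - x‖ / (‖x‖ + ‖y‖)) • (‖y - x‖⁻¹ • (y - x)) =
      (‖x‖ * ‖y‖ / (‖x‖ + ‖y‖)) • (normalize x + normalize y) := by
    simp only [NormedSpace.normalize]
    match_scalars
    · field_simp
      ring
    · field_simp
  rw [h, normalize_smul_of_pos (by positivity)]

lemma add_ne_zero_of_angle_ne_pi {x y : V} (hx : x ≠ 0) (h : angle x y ≠ π) : x + y ≠ 0 :=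
  fun hxy => h (eq_neg_of_add_eq_zero_right hxy ▸ angle_self_neg_of_nonzero hx)

lemma norm_add_eq_two_mul_cos_half_angle {u v : V} (hu : ‖u‖ = 1) (hv : ‖v‖ = 1) :
    ‖u + v‖ = 2 * cos (angle u v / 2) := by
  have hcos : 0 ≤ cos (angle u v / 2) :=
    cos_nonneg_of_mem_Icc ⟨by linarith [angle_nonneg u v, pi_pos], by linarith [angle_le_pi u v]⟩
  refine (sq_eq_sq₀ (norm_nonneg _) (by positivity)).mp ?_
  rw [norm_add_sq_real, inner_eq_cos_angle_of_norm_eq_one hu hv, hu, hv]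
  linear_combination (-2) * two_mul_cos_half_sq (angle u v)

lemma inner_normalize_add_left {u v : V} (hu : ‖u‖ = 1) (hv : ‖v‖ = 1) :
    ⟪normalize (u + v), u⟫ = cos (angle u v / 2) := by
  have h : ⟪u + v, u⟫ = 2 * cos (angle u v / 2) ^ 2 := by
    rw [inner_add_left, real_inner_self_eq_norm_sq, real_inner_comm,
      inner_eq_cos_angle_of_norm_eq_one hu hv, hu, two_mul_cos_half_sq]
    ring
  rw [NormedSpace.normalize, real_inner_smul_left, h, norm_add_eq_two_mul_cos_half_angle hu hv]
  by_cases hc : cos (angle u v / 2) = 0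
  · simp [hc]
  · field_simp

lemma inner_smul_sub_smul_cos_eq_zero {w u : V} (hu : ‖u‖ = 1) {φ : ℝ} (h : ⟪w, u⟫ = cos φ)
    (l : ℝ) : ⟪l • w - (l * cos φ) • u, u⟫ = 0 := by
  rw [inner_sub_left, real_inner_smul_left, real_inner_smul_left, h, real_inner_self_eq_norm_sq,
    hu]
  ring

lemma norm_smul_sub_smul_cos {w u : V} (hw : ‖w‖ = 1) (hu : ‖u‖ = 1) {φ : ℝ}
    (h : ⟪w, u⟫ = cos φ) (l : ℝ) : ‖l • w - (l * cos φ) • u‖ = |l * sin φ| := by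
  refine (sq_eq_sq₀ (norm_nonneg _) (abs_nonneg _)).mp ?_
  rw [sq_abs, norm_sub_sq_real, norm_smul, norm_smul, real_inner_smul_left, real_inner_smul_right,
    h, hw, hu, Real.norm_eq_abs, Real.norm_eq_abs]
  simp only [mul_one, sq_abs]
  linear_combination (-l ^ 2) * sin_sq_add_cos_sq φ

end InnerProductSpace

/-- the circle of radius `r` centered at the constructed center point `C`
touches the line through `P` and `P₋` perpendicularly at the tangential point `E`,
and the line through `P` and `P₊` perpendicularly at the tangential point `F`. -/
theorem center_point_tangency
    (Pm P Pp : EuclideanSpace ℝ (Fin 2))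
    (U V W : EuclideanSpace ℝ (Fin 2))
    (hU : U = Pm - P) (hV : V = Pp - P) (hW : W = Pp - Pm)
    (hLI : LinearIndependent ℝ ![U, V])
    (θ : ℝ) (hθ : θ = Real.arccos (⟪U, V⟫ / (‖U‖ * ‖V‖)))
    (r : ℝ) (hr : 0 < r)
    (lt lx : ℝ) (hlt : lt = r / Real.tan (θ / 2)) (hlx : lx = lt / Real.cos (θ / 2))
    (lb : ℝ) (hlb : lb = ‖U‖ * ‖W‖ / (‖U‖ + ‖V‖))
    (Q : EuclideanSpace ℝ (Fin 2)) (hQ : Q = Pm + lb • (‖W‖⁻¹ • W))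
    (E F C : EuclideanSpace ℝ (Fin 2))
    (hE : E = P + lt • (‖U‖⁻¹ • U))
    (hF : F = P + lt • (‖V‖⁻¹ • V))
    (hC : C = P + lx • (‖Q - P‖⁻¹ • (Q - P))) :
    dist C E = r ∧ dist C F = r ∧ ⟪C - E, U⟫ = 0 ∧ ⟪C - F, V⟫ = 0 := by
  have hU0 : U ≠ 0 := hLI.ne_zero 0
  have hV0 : V ≠ 0 := hLI.ne_zero 1
  have hUV : U ≠ V := by simpa using hLI.injective.ne zero_ne_one
  obtain ⟨hθ0, hθπ⟩ : θ ∈ Set.Ioo 0 π := hθ ▸ angle_mem_Ioo_of_linearIndependent hLI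
  have hcos : 0 < cos (θ / 2) := cos_pos_of_mem_Ioo ⟨by linarith, by linarith⟩
  have hsin : 0 < sin (θ / 2) := sin_pos_of_pos_of_lt_pi (by linarith) (by linarith)
  set u := normalize U
  set v := normalize V
  have hu : ‖u‖ = 1 := norm_normalize_eq_one_iff.mpr hU0
  have hv : ‖v‖ = 1 := norm_normalize_eq_one_iff.mpr hV0
  have huv : angle u v = θ := by rw [angle_normalize_left, angle_normalize_right, hθ]; rfl
  set w := normalize (u + v)
  have hw : ‖w‖ = 1 := norm_normalize_eq_one_iff.mpr
    (add_ne_zero_of_angle_ne_pi ((normalize_eq_zero_iff U).not.mpr hU0) (huv ▸ hθπ.ne))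
  have hwu : ⟪w, u⟫ = cos (θ / 2) := huv ▸ inner_normalize_add_left hu hv
  have hwv : ⟪w, v⟫ = cos (θ / 2) := by
    rw [← huv, angle_comm, ← inner_normalize_add_left hv hu, add_comm]
  have hC' : C = P + lx • w := by
    have hQP : Q - P = U + lb • (‖W‖⁻¹ • W) := by rw [hQ, hU]; abel
    have hWVU : W = V - U := by rw [hW, hU, hV]; abel
    rw [hC, show ‖Q - P‖⁻¹ • (Q - P) = normalize (Q - P) from rfl, hQP, hlb, hWVU,
      normalize_add_div_smul_normalize_sub hU0 hV0 hUV]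
  have hlt' : lt = lx * cos (θ / 2) := by rw [hlx]; field_simp
  have hr' : lx * sin (θ / 2) = r := by rw [hlx, hlt, tan_eq_sin_div_cos]; field_simp
  change E = P + lt • u at hE
  change F = P + lt • v at hF
  rw [hlt'] at hE hF
  refine ⟨?_, ?_, ?_, ?_⟩
  · rw [hC', hE, dist_add_left, dist_eq_norm, norm_smul_sub_smul_cos hw hu hwu, hr', abs_of_pos hr]
  · rw [hC', hF, dist_add_left, dist_eq_norm, norm_smul_sub_smul_cos hw hv hwv, hr', abs_of_pos hr]
  · rw [hC', hE, add_sub_add_left_eq_sub, ← norm_smul_normalize U, real_inner_smul_right,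
      inner_smul_sub_smul_cos_eq_zero hu hwu, mul_zero]
  · rw [hC', hF, add_sub_add_left_eq_sub, ← norm_smul_normalize V, real_inner_smul_right,
      inner_smul_sub_smul_cos_eq_zero hv hwv, mul_zero]
end

section
/- Tangency of the constructed circular arc to the tangential line: let P₋, P, P₊ be three non-collinear points in the Euclidean plane, θ ∈ (0, π) the angle between U = P₋ − P and V = P₊ − P, r > 0, l_t = r/tan(θ/2), l_x = l_t/cos(θ/2), E = P + l_t·U/‖U‖, and C = P + l_x·(Q − P)/‖Q − P‖ where Q = P₋ + (‖U‖·‖W‖/(‖U‖ + ‖V‖))·W/‖W‖ and W = P₊ − P₋. Then every point X on the line through P and P₋ satisfies dist(X, C) ≥ r, with equality if and only if X = E; equivalently, the line through P and P₋ is tangent at E to the circle of radius r centered at C. -/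
/-!
By the angle bisector theorem, `Q` divides `[P₋, P₊]` in the ratio `‖U‖ : ‖V‖`, so `Q - P` points
along `u + v`, where `u = U / ‖U‖` and `v = V / ‖V‖`; this bisector makes the angle `θ / 2` with
`u`. Hence `C - P`, of length `l_x = l_t / cos (θ / 2)`, projects orthogonally onto the line
`P P₋` at `E - P = l_t u`, and by Pythagoras `‖C - E‖ = l_t tan (θ / 2) = r`. A line through a
point of a circle orthogonal to the radius there is tangent to it.
-/

open scoped RealInnerProductSpace
open Real InnerProductGeometry

/-- The angle bisector theorem: the point dividing the segment `[x, y]` in the ratio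
`‖x‖ : ‖y‖` lies on the bisector of the angle between `x` and `y`. -/
lemma add_norm_div_smul_sub_eq_smul_normalize_add {E : Type*} [NormedAddCommGroup E]
    [NormedSpace ℝ E] {x : E} (hx : x ≠ 0) (y : E) :
    x + (‖x‖ / (‖x‖ + ‖y‖)) • (y - x) =
      (‖x‖ * ‖y‖ / (‖x‖ + ‖y‖)) • (NormedSpace.normalize x + NormedSpace.normalize y) := by
  have hsum : ‖x‖ + ‖y‖ ≠ 0 := by positivity
  have hx' := NormedSpace.norm_smul_normalize x
  have hy' := NormedSpace.norm_smul_normalize y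
  generalize NormedSpace.normalize x = x₁ at *
  generalize NormedSpace.normalize y = y₁ at *
  generalize ‖x‖ = a at *
  generalize ‖y‖ = b at *
  subst hx' hy'
  match_scalars
  · field_simp
    ring
  · field_simp

namespace EuclideanGeometry.Sphere

variable {V P : Type*} [NormedAddCommGroup V] [InnerProductSpace ℝ V] [MetricSpace P]
  [NormedAddTorsor V P]

lemma isTangentAt_affineSpan_pair {s : Sphere P} {p a b : P} (hp : p ∈ s)
    (hpab : p ∈ line[ℝ, a, b]) (ha : ⟪a -ᵥ p, p -ᵥ s.center⟫ = 0)
    (hb : ⟪b -ᵥ p, p -ᵥ s.center⟫ = 0) : s.IsTangentAt p line[ℝ, a, b] :=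
  ⟨hp, hpab, affineSpan_le.mpr <| by
    simp [Set.insert_subset_iff, mem_orthRadius_iff_inner_left, ha, hb]⟩

end EuclideanGeometry.Sphere

namespace InnerProductGeometry

variable {F : Type*} [NormedAddCommGroup F] [InnerProductSpace ℝ F]

lemma angle_pos_of_linearIndependent {x y : F} (h : LinearIndependent ℝ ![x, y]) :
    0 < angle x y := by
  refine (angle_nonneg x y).lt_of_ne' fun h0 ↦ ?_
  obtain ⟨-, c, -, rfl⟩ := angle_eq_zero_iff.mp h0
  simpa using (LinearIndependent.pair_iff.mp h c (-1) (by simp)).2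

lemma angle_lt_pi_of_linearIndependent {x y : F} (h : LinearIndependent ℝ ![x, y]) :
    angle x y < π := by
  refine (angle_le_pi x y).lt_of_ne fun hπ ↦ ?_
  obtain ⟨-, c, -, rfl⟩ := angle_eq_pi_iff.mp hπ
  simpa using (LinearIndependent.pair_iff.mp h c (-1) (by simp)).2

lemma norm_add_eq_two_mul_cos_half_angle {u v : F} (hu : ‖u‖ = 1) (hv : ‖v‖ = 1) :
    ‖u + v‖ = 2 * cos (angle u v / 2) := by
  have hcos := inner_eq_cos_angle_of_norm_eq_one hu hv
  rw [cos_half (by linarith [angle_nonneg u v, pi_pos]) (angle_le_pi u v),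
    ← sqrt_sq (norm_nonneg _), norm_add_sq_real, hu, hv, hcos,
    show (2 : ℝ) = √(2 ^ 2) from (sqrt_sq zero_le_two).symm, ← sqrt_mul (by positivity)]
  ring_nf

lemma inner_normalize_add_of_norm_eq_one {u v : F} (hu : ‖u‖ = 1) (hv : ‖v‖ = 1) :
    ⟪u, NormedSpace.normalize (u + v)⟫ = cos (angle u v / 2) := by
  have hinner : ⟪u, u + v⟫ = ‖u + v‖ ^ 2 / 2 := by
    rw [inner_add_right, norm_add_sq_real, real_inner_self_eq_norm_sq, hu, hv]
    ring
  rw [NormedSpace.normalize, real_inner_smul_right, hinner,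
    show cos (angle u v / 2) = ‖u + v‖ / 2 by rw [norm_add_eq_two_mul_cos_half_angle hu hv]; ring]
  rcases eq_or_ne ‖u + v‖ 0 with h | h
  · simp [h]
  · field_simp

lemma cos_half_angle_pos {u v : F} (hπ : angle u v < π) : 0 < cos (angle u v / 2) :=
  cos_pos_of_mem_Ioo ⟨by linarith [angle_nonneg u v, pi_pos], by linarith⟩

section Bisector

variable {u v : F} (hu : ‖u‖ = 1) (hv : ‖v‖ = 1) (hπ : angle u v < π)
include hu hv hπ

lemma inner_smul_normalize_add_sub_smul_eq_zero (t : ℝ) :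
    ⟪u, (t / cos (angle u v / 2)) • NormedSpace.normalize (u + v) - t • u⟫ = 0 := by
  rw [inner_sub_right, real_inner_smul_right, real_inner_smul_right,
    inner_normalize_add_of_norm_eq_one hu hv, real_inner_self_eq_norm_sq, hu,
    div_mul_cancel₀ _ (cos_half_angle_pos hπ).ne']
  ring

lemma norm_smul_normalize_add_sub_smul {t : ℝ} (ht : 0 ≤ t) :
    ‖(t / cos (angle u v / 2)) • NormedSpace.normalize (u + v) - t • u‖ =
      t * tan (angle u v / 2) := by
  set c := (t / cos (angle u v / 2)) • NormedSpace.normalize (u + v)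
  have hk : 0 < cos (angle u v / 2) := cos_half_angle_pos hπ
  have hc : ‖c‖ = t / cos (angle u v / 2) := by
    have hw : u + v ≠ 0 := by
      rw [← norm_pos_iff, norm_add_eq_two_mul_cos_half_angle hu hv]; positivity
    rw [norm_smul, NormedSpace.norm_normalize_eq_one_iff.mpr hw, mul_one,
      Real.norm_of_nonneg (by positivity)]
  have hpythagoras : ‖c‖ ^ 2 = ‖c - t • u‖ ^ 2 + ‖t • u‖ ^ 2 := by
    conv_lhs => rw [← sub_add_cancel c (t • u)]
    rw [norm_add_sq_real, real_inner_smul_right, real_inner_comm,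
      inner_smul_normalize_add_sub_smul_eq_zero hu hv hπ]
    ring
  have htan : 0 ≤ tan (angle u v / 2) :=
    tan_nonneg_of_nonneg_of_le_pi_div_two (by linarith [angle_nonneg u v]) (by linarith)
  refine (sq_eq_sq₀ (norm_nonneg _) (by positivity)).mp ?_
  rw [tan_eq_sin_div_cos, mul_pow, div_pow, sin_sq, ← sub_eq_of_eq_add hpythagoras, hc, norm_smul,
    hu, Real.norm_of_nonneg ht]
  field_simp

lemma isTangentAt_affineSpan_of_bisector (p : F) {t s : ℝ} (ht : 0 ≤ t) (hs : s ≠ 0) :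
    (⟨p + (t / cos (angle u v / 2)) • NormedSpace.normalize (u + v), t * tan (angle u v / 2)⟩ :
      EuclideanGeometry.Sphere F).IsTangentAt (p + t • u) line[ℝ, p, p + s • u] := by
  set c := (t / cos (angle u v / 2)) • NormedSpace.normalize (u + v)
  have hperp (a : ℝ) : ⟪(p + a • u) -ᵥ (p + t • u), (p + t • u) -ᵥ (p + c)⟫ = 0 := by
    rw [vsub_eq_sub, vsub_eq_sub, add_sub_add_left_eq_sub, add_sub_add_left_eq_sub, ← sub_smul,
      real_inner_smul_left, ← neg_sub c, inner_neg_right,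
      inner_smul_normalize_add_sub_smul_eq_zero hu hv hπ, neg_zero, mul_zero]
  refine EuclideanGeometry.Sphere.isTangentAt_affineSpan_pair ?_ ?_ (by simpa using hperp 0)
    (hperp s)
  · rw [EuclideanGeometry.mem_sphere, dist_comm, dist_eq_norm, add_sub_add_left_eq_sub,
      norm_smul_normalize_add_sub_smul hu hv hπ ht]
  · have hmem := vadd_left_mem_affineSpan_pair (k := ℝ) (p₁ := p) (p₂ := p + s • u) (v := t • u)
    rw [vadd_eq_add, add_comm (t • u) p, vsub_eq_sub, add_sub_cancel_left] at hmem
    exact hmem.mpr ⟨t / s, by rw [smul_smul, div_mul_cancel₀ _ hs]⟩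

end Bisector

end InnerProductGeometry

/-- the line through `P` and `P₋` is tangent at the tangential point `E` to
the circle of radius `r` centered at the constructed center point `C`: every point `X`
on the line satisfies `dist X C ≥ r`, with equality if and only if `X = E`. -/
theorem line_tangent_to_constructed_circle
    (Pm P Pp : EuclideanSpace ℝ (Fin 2))
    (U V W : EuclideanSpace ℝ (Fin 2))
    (hU : U = Pm - P) (hV : V = Pp - P) (hW : W = Pp - Pm)
    (hLI : LinearIndependent ℝ ![U, V])
    (θ : ℝ) (hθ : θ = Real.arccos (⟪U, V⟫ / (‖U‖ * ‖V‖)))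
    (r : ℝ) (hr : 0 < r)
    (lt lx : ℝ) (hlt : lt = r / Real.tan (θ / 2)) (hlx : lx = lt / Real.cos (θ / 2))
    (lb : ℝ) (hlb : lb = ‖U‖ * ‖W‖ / (‖U‖ + ‖V‖))
    (Q : EuclideanSpace ℝ (Fin 2)) (hQ : Q = Pm + lb • (‖W‖⁻¹ • W))
    (E C : EuclideanSpace ℝ (Fin 2))
    (hE : E = P + lt • (‖U‖⁻¹ • U))
    (hC : C = P + lx • (‖Q - P‖⁻¹ • (Q - P))) :
    ∀ X ∈ affineSpan ℝ ({P, Pm} : Set (EuclideanSpace ℝ (Fin 2))),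
      r ≤ dist X C ∧ (dist X C = r ↔ X = E) := by
  have hU0 : U ≠ 0 := hLI.ne_zero 0
  have hV0 : V ≠ 0 := hLI.ne_zero 1
  set u := NormedSpace.normalize U
  set v := NormedSpace.normalize V
  have hu : ‖u‖ = 1 := NormedSpace.norm_normalize_eq_one_iff.mpr hU0
  have hv : ‖v‖ = 1 := NormedSpace.norm_normalize_eq_one_iff.mpr hV0
  replace hθ : θ = angle U V := hθ
  have huv : angle u v = θ := by simp only [u, v, angle_normalize_left, angle_normalize_right, hθ]
  have hπ : θ < π := hθ ▸ angle_lt_pi_of_linearIndependent hLI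
  have htan : 0 < tan (θ / 2) := tan_pos_of_pos_of_lt_pi_div_two
    (by linarith [hθ ▸ angle_pos_of_linearIndependent hLI]) (by linarith)
  have hQP : Q - P = (‖U‖ * ‖V‖ / (‖U‖ + ‖V‖)) • (u + v) := by
    have hW' : ‖W‖ • (‖W‖⁻¹ • W) = W := NormedSpace.norm_smul_normalize W
    rw [← add_norm_div_smul_sub_eq_smul_normalize_add hU0, hQ, hlb, mul_div_right_comm, mul_smul,
      hW', hU, hV, hW, sub_sub_sub_cancel_right]
    abel
  have hC' : C = P + (lt / cos (θ / 2)) • NormedSpace.normalize (u + v) := by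
    rw [hC, hlx, hQP]
    exact congrArg _ (congrArg _ (NormedSpace.normalize_smul_of_pos (by positivity) _))
  have hE' : E = P + lt • u := hE
  have hPm : Pm = P + ‖U‖ • u := by
    simp only [u, NormedSpace.norm_smul_normalize, hU, add_sub_cancel]
  have hr' : r = lt * tan (θ / 2) := by rw [hlt, div_mul_cancel₀ _ htan.ne']
  have hlt0 : 0 ≤ lt := by rw [hlt]; positivity
  have hT := isTangentAt_affineSpan_of_bisector hu hv (huv ▸ hπ) P hlt0 (norm_ne_zero_iff.mpr hU0)
  rw [huv, ← hC', ← hE', ← hPm, ← hr'] at hT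
  intro X hX
  exact ⟨hT.isTangent.radius_le_dist_center hX,
    fun h ↦ hT.eq_of_mem_of_mem h hX, fun h ↦ h ▸ hT.mem_sphere⟩
end
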